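/- Hoffman–Wielandt inequality: for symmetric matrices A, B ∈ ℝ^{N×N} with eigenvalues λ₁(A) ≥ … ≥ λ_N(A) and λ₁(B) ≥ … ≥ λ_N(B), we have Σ_{i=1}^N (λ_i(A) − λ_i(B))² ≤ ‖A − B‖_F². -/

import Mathlib

/-!
Diagonalize `A = U D Uᵀ` and `B = V E Vᵀ`. Then `‖A - B‖_F² = Σ dᵢ² + Σ eⱼ² - 2 tr (A B)` and
`tr (A B) = Σᵢⱼ dᵢ eⱼ Wᵢⱼ²` with `W = Uᵀ V` orthogonal, so the matrix `(Wᵢⱼ²)` is doubly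
stochastic. By Birkhoff's theorem it is a convex combination of permutation matrices, hence
`tr (A B) ≤ max_σ Σᵢ dᵢ e_σ(i)`, and by the rearrangement inequality the maximum is attained when
both eigenvalue lists are sorted in the same order.
-/

/-- The eigenvalues of a real symmetric matrix listed in nonincreasing order
(with multiplicity); defined as `0` for non-Hermitian matrices. -/
noncomputable def sortedEigs {N : ℕ} (A : Matrix (Fin N) (Fin N) ℝ) : Fin N → ℝ :=
  if h : A.IsHermitian then
    fun i => (h.eigenvalues ∘ Tuple.sort h.eigenvalues) i.rev
  else 0

open Finset

namespace Tuple

theorem sum_mul_comp_perm_le_sum_sort {α : Type*} [Semiring α] [LinearOrder α]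
    [IsStrictOrderedRing α] [ExistsAddOfLE α] {N : ℕ} (x y : Fin N → α) (σ : Equiv.Perm (Fin N)) :
    ∑ i, x i * y (σ i) ≤ ∑ i, x (sort x i) * y (sort y i) := by
  calc ∑ i, x i * y (σ i)
      = ∑ i, x (sort x i) * y (sort y (((sort x).trans σ).trans (sort y).symm i)) :=
        (Fintype.sum_equiv (sort x) _ _ fun i => by simp).symm
    _ ≤ _ := ((monotone_sort x).monovary (monotone_sort y)).sum_mul_comp_perm_le_sum_mul

end Tuple

namespace Matrix

variable {n : Type*} [Fintype n]

theorem sum_sub_sq_eq_trace {R : Type*} [CommRing R] {A B : Matrix n n R}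
    (hA : A.IsSymm) (hB : B.IsSymm) :
    ∑ i, ∑ j, (A i j - B i j) ^ 2 = trace (A * A) + trace (B * B) - 2 * trace (A * B) := by
  calc ∑ i, ∑ j, (A i j - B i j) ^ 2 = ∑ i, ∑ j, ((A - B) ⊙ (A - B)) i j := by simp [sq]
    _ = trace ((A - B) * (A - B)) := by rw [sum_hadamard_eq, (hA.sub hB).eq]
    _ = _ := by
      rw [sub_mul, mul_sub, mul_sub, trace_sub, trace_sub, trace_sub, trace_mul_comm B A]
      ring

variable [DecidableEq n]

section OrderedField

variable {R : Type*} [Field R] [LinearOrder R] [IsStrictOrderedRing R]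

theorem hadamard_self_mem_doublyStochastic {W : Matrix n n R} (hW : W ∈ orthogonalGroup n R) :
    W ⊙ W ∈ doublyStochastic R n := by
  rw [mem_doublyStochastic_iff_sum]
  refine ⟨fun i j => mul_self_nonneg _, fun i => ?_, fun j => ?_⟩
  · simpa [mul_apply] using congr_fun₂ ((mem_orthogonalGroup_iff n R).mp hW) i i
  · simpa [mul_apply] using congr_fun₂ ((mem_orthogonalGroup_iff' n R).mp hW) j j

theorem vecMul_dotProduct_le_of_mem_doublyStochastic {M : Matrix n n R}
    (hM : M ∈ doublyStochastic R n) {x y : n → R} {C : R}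
    (h : ∀ σ : Equiv.Perm n, ∑ i, x i * y (σ i) ≤ C) : x ᵥ* M ⬝ᵥ y ≤ C := by
  have hlin : IsLinearMap R fun M : Matrix n n R => x ᵥ* M ⬝ᵥ y :=
    ⟨fun M N => by simp [vecMul_add, add_dotProduct],
     fun c M => by simp [vecMul_smul, smul_dotProduct]⟩
  rw [← SetLike.mem_coe, doublyStochastic_eq_convexHull_permMatrix] at hM
  refine convexHull_min ?_ (convex_halfSpace_le hlin C) hM
  rintro _ ⟨σ, rfl⟩
  have hperm : x ᵥ* σ.permMatrix R ⬝ᵥ y = ∑ i, x i * y (σ i) := by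
    rw [vecMul_permMatrix, dotProduct, ← Equiv.sum_comp σ]
    simp
  exact hperm.trans_le (h σ)

end OrderedField

theorem trace_conj_diagonal_mul_conj_diagonal {R : Type*} [CommSemiring R]
    (U V : Matrix n n R) (d e : n → R) :
    trace (U * diagonal d * Uᵀ * (V * diagonal e * Vᵀ)) =
      d ᵥ* ((Uᵀ * V) ⊙ (Uᵀ * V)) ⬝ᵥ e := by
  rw [dotProduct_vecMul_hadamard, transpose_mul, transpose_mul, diagonal_transpose,
    transpose_transpose, Matrix.mul_assoc U, Matrix.mul_assoc U, trace_mul_comm U]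
  simp only [Matrix.mul_assoc]

namespace IsHermitian

variable {A : Matrix n n ℝ}

theorem eq_eigenvectorUnitary_mul_diagonal_mul_transpose (hA : A.IsHermitian) :
    A = (hA.eigenvectorUnitary : Matrix n n ℝ) * diagonal hA.eigenvalues *
      (hA.eigenvectorUnitary : Matrix n n ℝ)ᵀ := by
  conv_lhs => rw [hA.spectral_theorem]
  rfl

theorem trace_mul_self (hA : A.IsHermitian) : trace (A * A) = ∑ i, hA.eigenvalues i ^ 2 := by
  set U := (hA.eigenvectorUnitary : Matrix n n ℝ)
  have hU : Uᵀ * U = 1 := (mem_orthogonalGroup_iff' n ℝ).mp hA.eigenvectorUnitary.2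
  calc trace (A * A)
      = trace (U * diagonal hA.eigenvalues * Uᵀ * (U * diagonal hA.eigenvalues * Uᵀ)) := by
        rw [← hA.eq_eigenvectorUnitary_mul_diagonal_mul_transpose]
    _ = hA.eigenvalues ⬝ᵥ hA.eigenvalues := by
        rw [trace_conj_diagonal_mul_conj_diagonal, hU, hadamard_one, diag_one, diagonal_one',
          vecMul_one]
    _ = _ := by simp [dotProduct, sq]

theorem trace_mul_le_sum_sort {N : ℕ} {A B : Matrix (Fin N) (Fin N) ℝ}
    (hA : A.IsHermitian) (hB : B.IsHermitian) :
    trace (A * B) ≤ ∑ i, hA.eigenvalues (Tuple.sort hA.eigenvalues i) *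
      hB.eigenvalues (Tuple.sort hB.eigenvalues i) := by
  set U := (hA.eigenvectorUnitary : Matrix (Fin N) (Fin N) ℝ)
  set V := (hB.eigenvectorUnitary : Matrix (Fin N) (Fin N) ℝ)
  have hW : Uᵀ * V ∈ orthogonalGroup (Fin N) ℝ :=
    (star hA.eigenvectorUnitary * hB.eigenvectorUnitary).2
  calc trace (A * B)
      = trace (U * diagonal hA.eigenvalues * Uᵀ * (V * diagonal hB.eigenvalues * Vᵀ)) := by
        rw [← hA.eq_eigenvectorUnitary_mul_diagonal_mul_transpose,
          ← hB.eq_eigenvectorUnitary_mul_diagonal_mul_transpose]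
    _ = hA.eigenvalues ᵥ* ((Uᵀ * V) ⊙ (Uᵀ * V)) ⬝ᵥ hB.eigenvalues :=
        trace_conj_diagonal_mul_conj_diagonal _ _ _ _
    _ ≤ _ := vecMul_dotProduct_le_of_mem_doublyStochastic
        (hadamard_self_mem_doublyStochastic hW) (Tuple.sum_mul_comp_perm_le_sum_sort _ _)

end IsHermitian

end Matrix

theorem sortedEigs_of_isHermitian {N : ℕ} {A : Matrix (Fin N) (Fin N) ℝ} (hA : A.IsHermitian)
    (i : Fin N) : sortedEigs A i = hA.eigenvalues (Tuple.sort hA.eigenvalues i.rev) := by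
  rw [sortedEigs, dif_pos hA]
  rfl

/-- Hoffman–Wielandt inequality: for symmetric `A, B` with eigenvalues listed
in nonincreasing order, `Σᵢ (λᵢ(A) − λᵢ(B))² ≤ ‖A − B‖_F²`. -/
theorem stmt_11 {N : ℕ} (A B : Matrix (Fin N) (Fin N) ℝ)
    (hA : A.IsHermitian) (hB : B.IsHermitian) :
    ∑ i, (sortedEigs A i - sortedEigs B i) ^ 2 ≤
      ∑ i, ∑ j, (A i j - B i j) ^ 2 := by
  set d := hA.eigenvalues
  set e := hB.eigenvalues
  have hrev : ∑ i, (sortedEigs A i - sortedEigs B i) ^ 2 =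
      ∑ i, (d (Tuple.sort d i) - e (Tuple.sort e i)) ^ 2 := by
    simp only [sortedEigs_of_isHermitian hA, sortedEigs_of_isHermitian hB]
    exact Equiv.sum_comp Fin.revPerm fun i => (d (Tuple.sort d i) - e (Tuple.sort e i)) ^ 2
  have hexpand : ∑ i, (d (Tuple.sort d i) - e (Tuple.sort e i)) ^ 2 =
      ∑ i, d i ^ 2 + ∑ i, e i ^ 2 - 2 * ∑ i, d (Tuple.sort d i) * e (Tuple.sort e i) := by
    simp only [sub_sq, sum_add_distrib, sum_sub_distrib, mul_sum, mul_assoc,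
      Equiv.sum_comp (Tuple.sort d) (d · ^ 2), Equiv.sum_comp (Tuple.sort e) (e · ^ 2)]
    ring
  rw [hrev, hexpand, Matrix.sum_sub_sq_eq_trace (Matrix.isHermitian_iff_isSymm.mp hA)
    (Matrix.isHermitian_iff_isSymm.mp hB), hA.trace_mul_self, hB.trace_mul_self]
  linarith [hA.trace_mul_le_sum_sort hB]
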